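/- In the Colonel Blotto game with favoritism, if battlefield i satisfies p_i < 0 and w_i·κ_A > q_i·w_i·κ_B − p_i for some κ_A, κ_B > 0, and Player A's allocation A_i is uniform on [−p_i, q_i·w_i·κ_B − p_i] while Player B's allocation B_i has CDF G(x) = 1 − q_i κ_B/κ_A + q_i x/(w_i κ_A) on [0, w_i κ_B] (G = 1 beyond), with A_i, B_i independent, then Player A's expected gain w_i·P(A_i > q_i·B_i − p_i) equals w_i − q_i·κ_B·w_i/(2·κ_A). -/

import Mathlib

/-!
Comparing distribution functions identifies the two laws: `A` is uniform on `[-p, q M - p]`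
with `M = w κ_B`, and the law of `B` is an atom of mass `α = 1 - q κ_B / κ_A` at `0` plus the
constant density `c = q / (w κ_A)` on `[0, M]`. By independence the event `q B - p < A` has the
same probability under the product of these laws. Integrating over `A` first, the section at `a` is
`B < (a + p) / q`, whose endpoint sweeps `[0, M]` exactly as `a` sweeps the support of `A`, so its
probability `α + c (a + p) / q` is affine in `a`; averaging gives
`α + c M / 2 = 1 - q κ_B / (2 κ_A)`.
-/

open MeasureTheory ProbabilityTheory Set
open scoped ProbabilityTheory

theorem ProbabilityTheory.IndepFun.measure_mem_eq_prod {Ω α β : Type*} [MeasurableSpace Ω]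
    [MeasurableSpace α] [MeasurableSpace β] {μ : Measure Ω} [IsFiniteMeasure μ]
    {X : Ω → α} {Y : Ω → β} (hX : Measurable X) (hY : Measurable Y) (hXY : IndepFun X Y μ)
    {S : Set (α × β)} (hS : MeasurableSet S) :
    μ {ω | (X ω, Y ω) ∈ S} = (μ.map X).prod (μ.map Y) S := by
  rw [← hXY.map_prod_eq_prod_map_map hX.aemeasurable hY.aemeasurable,
    Measure.map_apply (hX.prodMk hY) hS]
  rfl

theorem map_eq_of_forall_measure_le_eq {Ω : Type*} [MeasurableSpace Ω] {μ : Measure Ω}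
    [IsFiniteMeasure μ] {X : Ω → ℝ} (hX : Measurable X) {ν : Measure ℝ}
    (h : ∀ x, μ {ω | X ω ≤ x} = ν (Iic x)) : μ.map X = ν :=
  Measure.ext_of_Iic _ _ fun x => by rw [Measure.map_apply hX measurableSet_Iic]; exact h x

theorem cond_Icc_Iic {a b : ℝ} (hab : a < b) (x : ℝ) :
    volume[Iic x | Icc a b] = ENNReal.ofReal (min (max ((x - a) / (b - a)) 0) 1) := by
  have hba : 0 < b - a := sub_pos.mpr hab
  rw [cond_apply measurableSet_Icc, Real.volume_Icc, ← Ici_inter_Iic, inter_assoc, Iic_inter_Iic,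
    Ici_inter_Iic, Real.volume_Icc, ← ENNReal.ofReal_inv_of_pos hba,
    ← ENNReal.ofReal_mul (by positivity)]
  rcases le_total x a with hxa | hax
  · rw [ENNReal.ofReal_of_nonpos (mul_nonpos_of_nonneg_of_nonpos (by positivity)
      (by simp [hxa])), max_eq_right (div_nonpos_of_nonpos_of_nonneg (by linarith) hba.le)]
    simp
  rcases le_total x b with hxb | hbx
  · rw [min_eq_right hxb, max_eq_left (by positivity),
      min_eq_left (by rw [div_le_one hba]; linarith)]
    congr 1; field_simp
  · rw [min_eq_left hbx, max_eq_left (by positivity),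
      min_eq_right (by rw [le_div_iff₀ hba]; linarith)]
    congr 1; field_simp

noncomputable def zeroAtomAddUniform (α c M : ℝ) : Measure ℝ :=
  ENNReal.ofReal α • Measure.dirac 0 + ENNReal.ofReal c • volume.restrict (Icc 0 M)

instance (α c M : ℝ) : SFinite (zeroAtomAddUniform α c M) := by
  unfold zeroAtomAddUniform; infer_instance

section zeroAtomAddUniform

variable {α c M : ℝ}

theorem zeroAtomAddUniform_apply_of_zero_mem (hα : 0 ≤ α) (hc : 0 ≤ c) {s : Set ℝ}
    (hs : MeasurableSet s) (h0 : (0 : ℝ) ∈ s) {t : ℝ} (ht : 0 ≤ t)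
    (hst : (s ∩ Icc 0 M : Set ℝ) =ᵐ[volume] (Icc 0 t : Set ℝ)) :
    zeroAtomAddUniform α c M s = ENNReal.ofReal (α + c * t) := by
  rw [zeroAtomAddUniform, Measure.add_apply, Measure.smul_apply, Measure.smul_apply,
    Measure.dirac_apply_of_mem h0, Measure.restrict_apply hs, measure_congr hst,
    Real.volume_Icc, sub_zero, smul_eq_mul, smul_eq_mul, mul_one,
    ← ENNReal.ofReal_mul hc, ← ENNReal.ofReal_add hα (by positivity)]

theorem zeroAtomAddUniform_Iic (hα : 0 ≤ α) (hc : 0 ≤ c) (hM : 0 ≤ M) (x : ℝ) :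
    zeroAtomAddUniform α c M (Iic x) =
      ENNReal.ofReal (if x < 0 then 0 else α + c * min x M) := by
  split_ifs with hx
  · have h : Iic x ∩ Icc 0 M = ∅ := by
      ext y; simp only [mem_inter_iff, mem_Iic, mem_Icc, mem_empty_iff_false, iff_false]
      intro h; linarith [h.1, h.2.1]
    rw [zeroAtomAddUniform, Measure.add_apply, Measure.smul_apply, Measure.smul_apply,
      Measure.dirac_apply' 0 measurableSet_Iic,
      indicator_of_notMem (by simpa using hx), Measure.restrict_apply measurableSet_Iic,
      h]
    simp
  · have h : Iic x ∩ Icc 0 M = Icc 0 (min x M) := by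
      ext y; simp only [mem_inter_iff, mem_Iic, mem_Icc, le_min_iff]; tauto
    exact zeroAtomAddUniform_apply_of_zero_mem hα hc measurableSet_Iic (by simpa using hx)
      (le_min (not_lt.mp hx) hM) (Filter.EventuallyEq.of_eq h)

theorem zeroAtomAddUniform_Iio (hα : 0 ≤ α) (hc : 0 ≤ c) {t : ℝ} (ht : 0 < t)
    (htM : t ≤ M) :
    zeroAtomAddUniform α c M (Iio t) = ENNReal.ofReal (α + c * t) := by
  refine zeroAtomAddUniform_apply_of_zero_mem hα hc measurableSet_Iio ht ht.le ?_
  have h : Iio t ∩ Icc 0 M = Ico 0 t := by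
    ext y; simp only [mem_inter_iff, mem_Iio, mem_Icc, mem_Ico]
    constructor
    · rintro ⟨h1, h2, _⟩; exact ⟨h2, h1⟩
    · rintro ⟨h1, h2⟩; exact ⟨h2, h1, h2.le.trans htM⟩
  rw [h]
  exact Ico_ae_eq_Icc

end zeroAtomAddUniform

theorem intervalIntegral_const_add_div_mul_add {p q M α c : ℝ} (hq : 0 < q) :
    ∫ a in (-p)..(q * M - p), (α + c / q * (a + p)) = (α + c * M / 2) * (q * M) := by
  rw [intervalIntegral.integral_comp_add_right (fun a => α + c / q * a),
    intervalIntegral.integral_add intervalIntegrable_const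
      (intervalIntegral.intervalIntegrable_id.const_mul _),
    intervalIntegral.integral_const, intervalIntegral.integral_const_mul, integral_id]
  field_simp
  ring

theorem cond_Icc_prod_zeroAtomAddUniform_lt {p q M α c : ℝ} (hq : 0 < q) (hM : 0 < M)
    (hα : 0 ≤ α) (hc : 0 ≤ c) :
    (volume[|Icc (-p) (q * M - p)]).prod (zeroAtomAddUniform α c M) {z | q * z.2 - p < z.1} =
      ENNReal.ofReal (α + c * M / 2) := by
  set S : Set (ℝ × ℝ) := {z | q * z.2 - p < z.1}
  have hS : MeasurableSet S := measurableSet_lt (by fun_prop) (by fun_prop)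
  have hsection : ∀ a ∈ Ioc (-p) (q * M - p),
      zeroAtomAddUniform α c M (Prod.mk a ⁻¹' S) = ENNReal.ofReal (α + c / q * (a + p)) := by
    rintro a ⟨hpa, haM⟩
    have hslice : Prod.mk a ⁻¹' S = Iio ((a + p) / q) := by
      ext b
      simp only [S, mem_preimage, mem_ofPred_eq, mem_Iio, lt_div_iff₀ hq]
      constructor <;> intro h <;> linarith
    rw [hslice, zeroAtomAddUniform_Iio hα hc (div_pos (by linarith) hq)
      (by rw [div_le_iff₀ hq]; linarith)]
    congr 1; ring
  have hqM : 0 < q * M := by positivity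
  have hint : IntegrableOn (fun a => α + c / q * (a + p)) (Ioc (-p) (q * M - p)) :=
    Continuous.integrableOn_Ioc (by fun_prop)
  have hnonneg : 0 ≤ᵐ[volume.restrict (Ioc (-p) (q * M - p))] fun a => α + c / q * (a + p) :=
    (ae_restrict_iff' measurableSet_Ioc).mpr <| ae_of_all _ fun a ha => by
      have : 0 ≤ a + p := by linarith [ha.1]
      positivity
  rw [Measure.prod_apply hS, ProbabilityTheory.cond, lintegral_smul_measure,
    ← Measure.restrict_congr_set Ioc_ae_eq_Icc, setLIntegral_congr_fun measurableSet_Ioc hsection,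
    ← ofReal_integral_eq_lintegral_ofReal hint hnonneg,
    ← intervalIntegral.integral_of_le (by linarith), intervalIntegral_const_add_div_mul_add hq,
    Real.volume_Icc, sub_neg_eq_add, sub_add_cancel, ← ENNReal.ofReal_inv_of_pos hqM, smul_eq_mul,
    ← ENNReal.ofReal_mul (by positivity)]
  congr 1
  field_simp

/-- Battlefield `i` with `p_i < 0` and `w_i·κ_A > q_i·w_i·κ_B − p_i`: if `A_i` is uniform on
`[−p, q·w·κ_B − p]` and `B_i` follows the stated distribution, independently, then Player A's
expected gain is `w − q·κ_B·w/(2·κ_A)`. -/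
theorem stmt_16 {Ω : Type*} [MeasureSpace Ω] [IsProbabilityMeasure (ℙ : Measure Ω)]
    (w p q κA κB : ℝ) (hw : 0 < w) (hq : 0 < q) (hκA : 0 < κA) (hκB : 0 < κB)
    (hp : p < 0) (hcase : q * w * κB - p < w * κA)
    (A B : Ω → ℝ) (hAmeas : Measurable A) (hBmeas : Measurable B)
    (hindep : IndepFun A B ℙ)
    (hAcdf : ∀ x : ℝ, ℙ {ω | A ω ≤ x} = ENNReal.ofReal
      (min (max ((x + p) / (q * w * κB)) 0) 1))
    (hBcdf : ∀ x : ℝ, ℙ {ω | B ω ≤ x} = ENNReal.ofReal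
      (if x < 0 then 0
       else if x ≤ w * κB then 1 - q * κB / κA + q * x / (w * κA)
       else 1)) :
    w * (ℙ {ω | q * B ω - p < A ω}).toReal = w - q * κB * w / (2 * κA) := by
  have hatom : 0 ≤ 1 - q * κB / κA := by
    rw [sub_nonneg, div_le_one hκA]
    nlinarith
  have hlawA : (ℙ : Measure Ω).map A = volume[|Icc (-p) (q * (w * κB) - p)] := by
    refine map_eq_of_forall_measure_le_eq hAmeas fun x => ?_
    rw [hAcdf, cond_Icc_Iic (by nlinarith [mul_pos (mul_pos hq hw) hκB]) x]
    ring_nf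
  have hlawB : (ℙ : Measure Ω).map B =
      zeroAtomAddUniform (1 - q * κB / κA) (q / (w * κA)) (w * κB) := by
    refine map_eq_of_forall_measure_le_eq hBmeas fun x => ?_
    rw [hBcdf, zeroAtomAddUniform_Iic hatom (by positivity) (by positivity)]
    congr 1
    split_ifs with hx hxM
    · rfl
    · rw [min_eq_left hxM]; ring
    · rw [min_eq_right (not_le.mp hxM).le]; field_simp; ring
  have hS : MeasurableSet {z : ℝ × ℝ | q * z.2 - p < z.1} :=
    measurableSet_lt (by fun_prop) (by fun_prop)
  change w * (ℙ {ω | (A ω, B ω) ∈ {z : ℝ × ℝ | q * z.2 - p < z.1}}).toReal = _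
  rw [hindep.measure_mem_eq_prod hAmeas hBmeas hS, hlawA, hlawB,
    cond_Icc_prod_zeroAtomAddUniform_lt hq (by positivity) hatom (by positivity),
    ENNReal.toReal_ofReal (by positivity)]
  field_simp
  ring
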